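/- Under the same setting as the hitting-time bound: let $\{Z_t\}$ be geometrically mixing with constants $(C, \rho)$, $z$ a state with $\sigma(z) > 0$, $t_{\mathrm{mix}} = \lceil \log_\rho(\sigma(z)/(2C)) \rceil$, $\gamma \in (0,1)$, and $\tau$ the truncated first hitting time of $z$ within horizon $n$. Then for any initial state, $\mathbb{E}[\gamma^{n - \tau}] \le 2(n+1)\left[\gamma^{n-1} + \left(1 - \frac{\sigma(z)}{2 t_{\mathrm{mix}}}\right)^{n-1}\right]$. -/

import Mathlib

/-!
Write `S k` for the probability of avoiding `z` during the first `k` steps. The expectation is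
`∑_{i<n} γ^(n-i) ℙ(τ = i) + S n ≤ ∑_{i≤n} γ^(n-i) S i`. Geometric mixing makes every state reach
`z` at time `t_mix` with probability at least `σ z / 2`, so by the Markov property
`S (a t_mix + 1) ≤ (1 - σ z / 2)^a`; Bernoulli's inequality turns this into
`S k ≤ 2 α^k` with `α = 1 - σ z / (2 t_mix)`. Each of the `n + 1` terms `γ^(n-i) α^i` is at most
`max γ α ^ (n-1)`.
-/

open Finset

/-- `t`-step transition probabilities of a finite Markov chain with kernel `K`. -/
noncomputable def kpow {Z : Type*} [Fintype Z] [DecidableEq Z]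
    (K : Z → Z → ℝ) : ℕ → Z → Z → ℝ
  | 0, z0, z' => if z0 = z' then 1 else 0
  | t + 1, z0, z' => ∑ u, K z0 u * kpow K t u z'

/-- `hitProb K z i z0` is the probability that the chain started at `z0` visits `z`
for the first time at time `i`. -/
noncomputable def hitProb {Z : Type*} [Fintype Z] [DecidableEq Z]
    (K : Z → Z → ℝ) (z : Z) : ℕ → Z → ℝ
  | 0, z0 => if z0 = z then 1 else 0
  | i + 1, z0 => if z0 = z then 0 else ∑ u, K z0 u * hitProb K z i u

lemma one_sub_div_mem_Icc {p : ℝ} (hp0 : 0 ≤ p) (hp1 : p ≤ 1) (t : ℕ) :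
    1 - p / t ∈ Set.Icc 0 1 := by
  rcases Nat.eq_zero_or_pos t with rfl | ht
  · simp
  · have hpt : p / t ≤ 1 := div_le_one_of_le₀ (hp1.trans (by exact_mod_cast ht)) t.cast_nonneg
    exact ⟨by linarith, by linarith [div_nonneg hp0 t.cast_nonneg]⟩

lemma one_sub_le_one_sub_div_pow {p : ℝ} {t : ℕ} (ht : t ≠ 0) (hp : p ≤ 2 * t) :
    1 - p ≤ (1 - p / t) ^ t := by
  have ht' : (0 : ℝ) < t := by positivity
  have hpt : -2 ≤ -(p / t) := neg_le_neg ((div_le_iff₀ ht').2 (by linarith))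
  calc 1 - p = 1 + t * -(p / t) := by field_simp; ring
    _ ≤ (1 + -(p / t)) ^ t := one_add_mul_le_pow hpt t
    _ = (1 - p / t) ^ t := by ring

lemma sub_le_of_sum_abs_sub_le {ι : Type*} [Fintype ι] {f g : ι → ℝ} {ε : ℝ}
    (h : ∑ i, |f i - g i| ≤ ε) (i : ι) : g i - ε ≤ f i := by
  have hi := (single_le_sum (fun j _ => abs_nonneg (f j - g j)) (mem_univ i)).trans h
  linarith [(abs_le.1 hi).1]

lemma pow_ceil_log_div_log_le {ρ y : ℝ} (hρ0 : 0 < ρ) (hρ1 : ρ < 1) (hy : 0 < y) :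
    ρ ^ ⌈Real.log y / Real.log ρ⌉₊ ≤ y := by
  rw [Real.pow_le_iff_le_log hρ0 hy, ← div_le_iff_of_neg (Real.log_neg hρ0 hρ1)]
  exact Nat.le_ceil _

lemma pow_sub_mul_pow_le_add {γ α : ℝ} (hγ0 : 0 ≤ γ) (hγ1 : γ ≤ 1) (hα0 : 0 ≤ α) (hα1 : α ≤ 1)
    {i n : ℕ} (hi : i ≤ n) : γ ^ (n - i) * α ^ i ≤ γ ^ (n - 1) + α ^ (n - 1) := by
  calc γ ^ (n - i) * α ^ i ≤ max γ α ^ (n - i) * max γ α ^ i := by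
        gcongr
        exacts [le_max_left γ α, le_max_right γ α]
    _ = max γ α ^ n := by rw [← pow_add, Nat.sub_add_cancel hi]
    _ ≤ max γ α ^ (n - 1) :=
        pow_le_pow_of_le_one (le_max_of_le_left hγ0) (max_le hγ1 hα1) (Nat.sub_le n 1)
    _ ≤ γ ^ (n - 1) + α ^ (n - 1) := by
        rcases max_choice γ α with h | h <;> rw [h] <;>
          linarith [pow_nonneg hγ0 (n - 1), pow_nonneg hα0 (n - 1)]

section Markov

variable {Z : Type*} [Fintype Z] [DecidableEq Z] {K : Z → Z → ℝ}

variable (K) in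
/-- `survivalProb K z k x` is the probability that the chain started at `x` avoids `z`
at all times `0, …, k - 1`. -/
noncomputable def survivalProb (z : Z) : ℕ → Z → ℝ
  | 0, _ => 1
  | k + 1, x => if x = z then 0 else ∑ u, K x u * survivalProb z k u

lemma kpow_nonneg (hK0 : ∀ x y, 0 ≤ K x y) : ∀ t x y, 0 ≤ kpow K t x y
  | 0, x, y => by unfold kpow; split_ifs <;> norm_num
  | t + 1, _, y => sum_nonneg fun u _ => mul_nonneg (hK0 _ _) (kpow_nonneg hK0 t u y)

lemma sum_kpow (hK1 : ∀ x, ∑ y, K x y = 1) : ∀ t x, ∑ y, kpow K t x y = 1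
  | 0, x => by simp [kpow]
  | t + 1, x => by
    simp only [kpow]
    rw [sum_comm]
    simp_rw [← mul_sum, sum_kpow hK1 t, mul_one, hK1]

lemma kpow_le_one (hK0 : ∀ x y, 0 ≤ K x y) (hK1 : ∀ x, ∑ y, K x y = 1) (t : ℕ) (x y : Z) :
    kpow K t x y ≤ 1 :=
  sum_kpow hK1 t x ▸ single_le_sum (fun u _ => kpow_nonneg hK0 t x u) (mem_univ y)

lemma hitProb_nonneg (hK0 : ∀ x y, 0 ≤ K x y) (z : Z) : ∀ i x, 0 ≤ hitProb K z i x
  | 0, x => by unfold hitProb; split_ifs <;> norm_num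
  | i + 1, x => by
    unfold hitProb
    split_ifs
    · rfl
    · exact sum_nonneg fun u _ => mul_nonneg (hK0 _ _) (hitProb_nonneg hK0 z i u)

lemma survivalProb_nonneg (hK0 : ∀ x y, 0 ≤ K x y) (z : Z) : ∀ k x, 0 ≤ survivalProb K z k x
  | 0, _ => zero_le_one
  | k + 1, x => by
    unfold survivalProb
    split_ifs
    · rfl
    · exact sum_nonneg fun u _ => mul_nonneg (hK0 _ _) (survivalProb_nonneg hK0 z k u)

lemma survivalProb_succ_self (z : Z) (k : ℕ) : survivalProb K z (k + 1) z = 0 := by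
  simp [survivalProb]

lemma sum_hitProb_add_survivalProb (hK1 : ∀ x, ∑ y, K x y = 1) (z : Z) :
    ∀ k x, ∑ i ∈ range k, hitProb K z i x + survivalProb K z k x = 1
  | 0, x => by simp [survivalProb]
  | k + 1, x => by
    rw [sum_range_succ']
    by_cases hx : x = z
    · simp [hitProb, survivalProb, hx]
    · simp only [hitProb, survivalProb, if_neg hx, add_zero]
      rw [sum_comm, ← sum_add_distrib, ← hK1 x]
      refine sum_congr rfl fun u _ => ?_
      rw [← mul_sum, ← mul_add, sum_hitProb_add_survivalProb hK1 z k u, mul_one]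

lemma hitProb_eq_sub (hK1 : ∀ x, ∑ y, K x y = 1) (z : Z) (i : ℕ) (x : Z) :
    hitProb K z i x = survivalProb K z i x - survivalProb K z (i + 1) x := by
  have h := sum_hitProb_add_survivalProb hK1 z (i + 1) x
  rw [sum_range_succ, ← sum_hitProb_add_survivalProb hK1 z i x] at h
  linarith

lemma hitProb_le_survivalProb (hK0 : ∀ x y, 0 ≤ K x y) (hK1 : ∀ x, ∑ y, K x y = 1) (z : Z)
    (i : ℕ) (x : Z) : hitProb K z i x ≤ survivalProb K z i x := by
  rw [hitProb_eq_sub hK1]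
  linarith [survivalProb_nonneg hK0 z (i + 1) x]

lemma survivalProb_antitone (hK0 : ∀ x y, 0 ≤ K x y) (hK1 : ∀ x, ∑ y, K x y = 1) (z : Z)
    (x : Z) : Antitone (survivalProb K z · x) :=
  antitone_nat_of_succ_le fun i => by
    linarith [hitProb_eq_sub hK1 z i x, hitProb_nonneg hK0 z i x]

lemma survivalProb_le_one (hK0 : ∀ x y, 0 ≤ K x y) (hK1 : ∀ x, ∑ y, K x y = 1) (z : Z)
    (k : ℕ) (x : Z) : survivalProb K z k x ≤ 1 :=
  survivalProb_antitone hK0 hK1 z x (Nat.zero_le k)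

/-- Markov property at time `t`: avoiding `z` up to time `t + k` forces avoiding it on the
last `k` steps. -/
lemma survivalProb_add_le (hK0 : ∀ x y, 0 ≤ K x y) (z : Z) : ∀ t k x,
    survivalProb K z (t + k) x ≤ ∑ u, kpow K t x u * survivalProb K z k u
  | 0, k, x => by simp [kpow]
  | t + 1, k, x => by
    rw [show t + 1 + k = t + k + 1 by omega]
    simp only [survivalProb, kpow]
    split_ifs
    · exact sum_nonneg fun u _ => mul_nonneg (kpow_nonneg hK0 (t + 1) x u)
        (survivalProb_nonneg hK0 z k u)
    · calc ∑ v, K x v * survivalProb K z (t + k) v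
          ≤ ∑ v, K x v * ∑ u, kpow K t v u * survivalProb K z k u :=
            sum_le_sum fun v _ => mul_le_mul_of_nonneg_left
              (survivalProb_add_le hK0 z t k v) (hK0 _ _)
        _ = ∑ u, (∑ v, K x v * kpow K t v u) * survivalProb K z k u := by
            simp_rw [mul_sum, sum_mul, mul_assoc]
            exact sum_comm

lemma survivalProb_add_succ_le (hK0 : ∀ x y, 0 ≤ K x y) (hK1 : ∀ x, ∑ y, K x y = 1)
    (z : Z) {k : ℕ} {c : ℝ} (hc : ∀ u, survivalProb K z (k + 1) u ≤ c) (t : ℕ) (x : Z) :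
    survivalProb K z (t + (k + 1)) x ≤ (1 - kpow K t x z) * c := by
  have hz : kpow K t x z * survivalProb K z (k + 1) z = 0 := by
    rw [survivalProb_succ_self, mul_zero]
  calc survivalProb K z (t + (k + 1)) x
      ≤ ∑ u, kpow K t x u * survivalProb K z (k + 1) u := survivalProb_add_le hK0 z t _ x
    _ = ∑ u ∈ univ.erase z, kpow K t x u * survivalProb K z (k + 1) u :=
        (sum_erase (f := fun u => kpow K t x u * survivalProb K z (k + 1) u) univ hz).symm
    _ ≤ ∑ u ∈ univ.erase z, kpow K t x u * c :=
        sum_le_sum fun u _ => mul_le_mul_of_nonneg_left (hc u) (kpow_nonneg hK0 t x u)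
    _ = (1 - kpow K t x z) * c := by
        rw [sum_erase_eq_sub (mem_univ z), ← sum_mul, sum_kpow hK1, sub_mul]

lemma survivalProb_mul_add_one_le (hK0 : ∀ x y, 0 ≤ K x y) (hK1 : ∀ x, ∑ y, K x y = 1)
    (z : Z) {t : ℕ} {β : ℝ} (hβ : ∀ x, 1 - kpow K t x z ≤ β) :
    ∀ a x, survivalProb K z (a * t + 1) x ≤ β ^ a
  | 0, x => by simpa using survivalProb_le_one hK0 hK1 z 1 x
  | a + 1, x => by
    have hβ0 : 0 ≤ β := (sub_nonneg.2 (kpow_le_one hK0 hK1 t z z)).trans (hβ z)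
    rw [show (a + 1) * t + 1 = t + (a * t + 1) by ring, pow_succ']
    exact (survivalProb_add_succ_le hK0 hK1 z (survivalProb_mul_add_one_le hK0 hK1 z hβ a)
      t x).trans (mul_le_mul_of_nonneg_right (hβ x) (pow_nonneg hβ0 a))

lemma survivalProb_le_two_mul_pow (hK0 : ∀ x y, 0 ≤ K x y) (hK1 : ∀ x, ∑ y, K x y = 1)
    (z : Z) {t : ℕ} {p : ℝ} (hp0 : 0 ≤ p) (hp1 : p ≤ 1 / 2) (hhit : ∀ x, p ≤ kpow K t x z)
    (k : ℕ) (x : Z) : survivalProb K z k x ≤ 2 * (1 - p / t) ^ k := by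
  obtain ⟨hα0, hα1⟩ := one_sub_div_mem_Icc hp0 (by linarith) t
  have hS1 := survivalProb_le_one hK0 hK1 z k x
  rcases eq_or_ne t 0 with rfl | ht
  · -- `p / 0 = 0`, so the claimed bound is just `2`
    simp only [CharP.cast_eq_zero, div_zero, sub_zero, one_pow]
    linarith
  set α := 1 - p / t
  have hαt : 1 - p ≤ α ^ t := one_sub_le_one_sub_div_pow ht (by
    have : (1 : ℝ) ≤ t := by exact_mod_cast Nat.one_le_iff_ne_zero.2 ht
    linarith)
  rcases k with _ | j
  · linarith
  obtain ⟨a, e, he, rfl⟩ : ∃ a e, e < t ∧ j = t * a + e :=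
    ⟨j / t, j % t, Nat.mod_lt _ (Nat.pos_of_ne_zero ht), (Nat.div_add_mod j t).symm⟩
  have hrest : 1 / 2 ≤ α ^ (e + 1) :=
    calc 1 / 2 ≤ α ^ t := by linarith
      _ ≤ α ^ (e + 1) := pow_le_pow_of_le_one hα0 hα1 he
  calc survivalProb K z (t * a + e + 1) x ≤ survivalProb K z (a * t + 1) x :=
        survivalProb_antitone hK0 hK1 z x (by rw [mul_comm]; omega)
    _ ≤ (1 - p) ^ a := survivalProb_mul_add_one_le hK0 hK1 z (fun x => by linarith [hhit x]) a x
    _ ≤ (α ^ t) ^ a := pow_le_pow_left₀ (by linarith) hαt a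
    _ ≤ 2 * α ^ (t * a + e + 1) := by
        rw [add_assoc, pow_add, pow_mul]
        nlinarith [pow_nonneg (pow_nonneg hα0 t) a]

lemma sum_pow_mul_hitProb_add_le (hK0 : ∀ x y, 0 ≤ K x y) (hK1 : ∀ x, ∑ y, K x y = 1)
    (z : Z) {γ : ℝ} (hγ : 0 ≤ γ) (n : ℕ) (x : Z) :
    ∑ i ∈ range n, γ ^ (n - i) * hitProb K z i x + (1 - ∑ i ∈ range n, hitProb K z i x)
      ≤ ∑ i ∈ range (n + 1), γ ^ (n - i) * survivalProb K z i x := by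
  rw [sum_range_succ, Nat.sub_self, pow_zero, one_mul,
    ← sum_hitProb_add_survivalProb hK1 z n x, add_sub_cancel_left]
  gcongr with i
  exact hitProb_le_survivalProb hK0 hK1 z i x

end Markov

/-- With `τ` the first hitting time of `z` truncated at horizon `n`, `ℙ(τ = i) = hitProb K z i z0`
for `i ≤ n - 1` and `ℙ(τ = n)` is the remaining mass. -/
theorem exp_gamma_hitting_bound_general {Z : Type*} [Fintype Z] [DecidableEq Z]
    (K : Z → Z → ℝ) (σ : Z → ℝ) (C ρ γ : ℝ)
    (hK0 : ∀ z z', 0 ≤ K z z') (hK1 : ∀ z, ∑ z', K z z' = 1)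
    (hσ0 : ∀ z, 0 ≤ σ z) (hσ1 : ∑ z, σ z = 1)
    (hC : 0 < C) (hρ0 : 0 < ρ) (hρ1 : ρ < 1)
    (hγ0 : 0 < γ) (hγ1 : γ < 1)
    (hmix : ∀ (t : ℕ) (z0 : Z), ∑ z', |kpow K t z0 z' - σ z'| ≤ C * ρ ^ t)
    (z : Z) (hz : 0 < σ z)
    (tmix : ℕ) (htmix : tmix = ⌈Real.log (σ z / (2 * C)) / Real.log ρ⌉₊)
    (n : ℕ) (z0 : Z) :
    (∑ i ∈ Finset.range n, γ ^ (n - i) * hitProb K z i z0)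
        + (1 - ∑ i ∈ Finset.range n, hitProb K z i z0)
      ≤ 2 * (n + 1) * (γ ^ (n - 1) + (1 - σ z / (2 * tmix)) ^ (n - 1)) := by
  have hσz : σ z ≤ 1 := hσ1 ▸ single_le_sum (fun u _ => hσ0 u) (mem_univ z)
  have hCρ : C * ρ ^ tmix ≤ σ z / 2 :=
    calc C * ρ ^ tmix ≤ C * (σ z / (2 * C)) := by
          rw [htmix]
          gcongr
          exact pow_ceil_log_div_log_le hρ0 hρ1 (by positivity)
      _ = σ z / 2 := by field_simp
  have hhit : ∀ x, σ z / 2 ≤ kpow K tmix x z := fun x => by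
    linarith [sub_le_of_sum_abs_sub_le (hmix tmix x) z]
  rw [← div_div]
  obtain ⟨hα0, hα1⟩ := one_sub_div_mem_Icc (p := σ z / 2) (by positivity) (by linarith) tmix
  calc _ ≤ ∑ i ∈ range (n + 1), γ ^ (n - i) * survivalProb K z i z0 :=
        sum_pow_mul_hitProb_add_le hK0 hK1 z hγ0.le n z0
    _ ≤ ∑ i ∈ range (n + 1), 2 * (γ ^ (n - 1) + (1 - σ z / 2 / tmix) ^ (n - 1)) :=
        sum_le_sum fun i hi => calc
          γ ^ (n - i) * survivalProb K z i z0 ≤ γ ^ (n - i) * (2 * (1 - σ z / 2 / tmix) ^ i) := by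
            gcongr
            exact survivalProb_le_two_mul_pow hK0 hK1 z (by positivity) (by linarith) hhit i z0
          _ = 2 * (γ ^ (n - i) * (1 - σ z / 2 / tmix) ^ i) := by ring
          _ ≤ _ := by
            gcongr
            exact pow_sub_mul_pow_le_add hγ0.le hγ1.le hα0 hα1 (Nat.lt_succ_iff.1 (mem_range.1 hi))
    _ = _ := by rw [sum_const, card_range, nsmul_eq_mul]; push_cast; ring

/-- with `τ` the first hitting time of `z` truncated at horizon `n`
(so `ℙ(τ = i) = hitProb K z i z0` for `i ≤ n - 1` and `ℙ(τ = n)` the remaining mass),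
`𝔼[γ^(n - τ)] ≤ 2 (n+1) (γ^(n-1) + (1 - σ z / (2 t_mix))^(n-1))`. -/
theorem exp_gamma_hitting_bound {Z : Type*} [Fintype Z] [DecidableEq Z]
    (K : Z → Z → ℝ) (σ : Z → ℝ) (C ρ γ : ℝ)
    (hK0 : ∀ z z', 0 ≤ K z z') (hK1 : ∀ z, ∑ z', K z z' = 1)
    (hσ0 : ∀ z, 0 ≤ σ z) (hσ1 : ∑ z, σ z = 1)
    (hstat : ∀ z', ∑ z, σ z * K z z' = σ z')
    (hC : 0 < C) (hρ0 : 0 < ρ) (hρ1 : ρ < 1)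
    (hγ0 : 0 < γ) (hγ1 : γ < 1)
    (hmix : ∀ (t : ℕ) (z0 : Z), ∑ z', |kpow K t z0 z' - σ z'| ≤ C * ρ ^ t)
    (z : Z) (hz : 0 < σ z)
    (tmix : ℕ) (htmix : tmix = ⌈Real.log (σ z / (2 * C)) / Real.log ρ⌉₊)
    (n : ℕ) (hn : 1 ≤ n) (z0 : Z) :
    (∑ i ∈ Finset.range n, γ ^ (n - i) * hitProb K z i z0)
        + (1 - ∑ i ∈ Finset.range n, hitProb K z i z0)
      ≤ 2 * (n + 1) * (γ ^ (n - 1) + (1 - σ z / (2 * tmix)) ^ (n - 1)) :=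
  exp_gamma_hitting_bound_general K σ C ρ γ hK0 hK1 hσ0 hσ1 hC hρ0 hρ1 hγ0 hγ1 hmix z hz tmix htmix
    n z0
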